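/- Let C₀ ⊆ ℝᵐ be an open convex set and F : ℝᵐ → ℝᵐ continuously differentiable and pseudomonotone on C₀ with symmetric Jacobian DF(x) for every x ∈ C₀. Let P ∈ ℝ^{m×m} be an orthogonal projection matrix (Pᵀ = P, P² = P). Assume that for every x ∈ C₀: (i) tr((DF(x)·P)²) = tr(DF(x)²·P); and (ii) the matrix DF(x)·P is not positive semidefinite. Let s ≥ 0 be such that s ≥ ρ(DF(x)) for every x ∈ C₀, where ρ(DF(x)) = max_i |λ_i(DF(x))| is the spectral radius of the symmetric matrix DF(x). Then the map x ↦ F(x) + s · P x is monotone on C₀: ⟪(F(x) + s·Px) − (F(y) + s·Py), x − y⟫ ≥ 0 for all x, y ∈ C₀. -/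

import Mathlib

/-! The trace identity forces the symmetric Jacobian `K = DF(x)` to commute with the orthogonal
projection `P`, so `range P` and `ker P` are `K`-orthogonal. Pseudomonotonicity makes the
quadratic form of `K` nonnegative on the hyperplane `F(x)ᗮ`, so `K` admits no two `K`-orthogonal
negative directions; as `KP` is not positive semidefinite, one of them lies in `range P`, hence
`K` is positive semidefinite on `ker P`. On `range P` the shift by `s ≥ ρ(K)` makes `K + s`
positive semidefinite, so `DF(x) + sP` is positive semidefinite on `C₀`, and integrating along
segments gives monotonicity of `F + sP`. -/

open Matrix Filter Set Topology

variable {n : Type*} [Fintype n]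

namespace Matrix

lemma IsSymm.mulVec_dotProduct {R : Type*} [CommSemiring R] {A : Matrix n n R} (hA : A.IsSymm)
    (v w : n → R) : A *ᵥ v ⬝ᵥ w = v ⬝ᵥ A *ᵥ w := by
  rw [dotProduct_mulVec, ← vecMul_transpose, hA.eq]

lemma IsSymm.mulVec_dotProduct_mulVec_eq_zero_of_commute {R : Type*} [CommSemiring R]
    {K P : Matrix n n R} (hP : P.IsSymm) (hKP : Commute K P) {v : n → R} (hv : P *ᵥ v = 0)
    (w : n → R) : P *ᵥ w ⬝ᵥ K *ᵥ v = 0 := by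
  rw [hP.mulVec_dotProduct, mulVec_mulVec, ← hKP.eq, ← mulVec_mulVec, hv, mulVec_zero,
    dotProduct_zero]

-- `(f ⬝ᵥ v) • p - (f ⬝ᵥ p) • v` lies in the hyperplane `fᗮ`, where the form is nonnegative.
lemma IsSymm.dotProduct_mulVec_self_nonneg_of_orthogonal {K : Matrix n n ℝ} (hK : K.IsSymm)
    {f p v : n → ℝ} (hf : ∀ w, f ⬝ᵥ w = 0 → 0 ≤ w ⬝ᵥ K *ᵥ w) (hp : p ⬝ᵥ K *ᵥ p < 0)
    (hpv : p ⬝ᵥ K *ᵥ v = 0) : 0 ≤ v ⬝ᵥ K *ᵥ v := by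
  by_contra! hv
  have hvp : v ⬝ᵥ K *ᵥ p = 0 := by rw [← hK.mulVec_dotProduct, dotProduct_comm, hpv]
  rcases eq_or_ne (f ⬝ᵥ v) 0 with hfv | hfv
  · exact hv.not_ge (hf v hfv)
  set a := f ⬝ᵥ v
  set b := f ⬝ᵥ p
  have hw := hf (a • p - b • v) (by simp only [dotProduct_sub, dotProduct_smul, smul_eq_mul]; ring)
  have hexp : (a • p - b • v) ⬝ᵥ K *ᵥ (a • p - b • v) =
      a ^ 2 * (p ⬝ᵥ K *ᵥ p) + b ^ 2 * (v ⬝ᵥ K *ᵥ v) := by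
    simp only [mulVec_sub, mulVec_smul, dotProduct_sub, sub_dotProduct, dotProduct_smul,
      smul_dotProduct, smul_eq_mul, hpv, hvp]
    ring
  nlinarith [sq_pos_of_ne_zero hfv, sq_nonneg b]

lemma IsSymm.dotProduct_mulVec_self_nonneg_of_mulVec_eq_zero {K P : Matrix n n ℝ}
    (hK : K.IsSymm) (hP : P.IsSymm) (hPP : P * P = P) (hKP : Commute K P)
    (hnpsd : ¬ (K * P).PosSemidef) {f : n → ℝ} (hf : ∀ w, f ⬝ᵥ w = 0 → 0 ≤ w ⬝ᵥ K *ᵥ w)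
    {v : n → ℝ} (hv : P *ᵥ v = 0) : 0 ≤ v ⬝ᵥ K *ᵥ v := by
  have hKP_symm : (K * P).IsHermitian := by
    rw [isHermitian_iff_isSymm, IsSymm, transpose_mul, hK.eq, hP.eq, hKP.eq]
  obtain ⟨w, hw⟩ : ∃ w, w ⬝ᵥ (K * P) *ᵥ w < 0 := by
    by_contra! h
    exact hnpsd (PosSemidef.of_dotProduct_mulVec_nonneg hKP_symm (by simpa using h))
  refine hK.dotProduct_mulVec_self_nonneg_of_orthogonal hf (p := P *ᵥ w) ?_ ?_
  · rw [hP.mulVec_dotProduct, mulVec_mulVec, mulVec_mulVec]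
    rwa [← hKP.eq, mul_assoc, hPP]
  · exact hP.mulVec_dotProduct_mulVec_eq_zero_of_commute hKP hv w

variable [DecidableEq n]

-- `A = KP - PK` is skew-symmetric and the trace identity says exactly `tr (Aᵀ A) = 0`.
theorem commute_of_trace_mul_sq_eq {K P : Matrix n n ℝ} (hK : K.IsSymm) (hP : P.IsSymm)
    (hPP : P * P = P) (h : ((K * P) ^ 2).trace = (K ^ 2 * P).trace) : Commute K P := by
  set A := K * P - P * K
  have hA : Aᴴ = -A := by
    simp [A, conjTranspose_eq_transpose_of_trivial, transpose_mul, hK.eq, hP.eq]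
  have hAA : (A * A).trace = 2 * ((K * P) ^ 2).trace - 2 * (K ^ 2 * P).trace := by
    have hexp : A * A = K * P * (K * P) - K * (P * P) * K - P * (K * K) * P + P * K * (P * K) := by
      simp only [A]; noncomm_ring
    have h₁ : (K * (P * P) * K).trace = (K ^ 2 * P).trace := by
      rw [hPP, trace_mul_comm, sq, ← mul_assoc]
    have h₂ : (P * (K * K) * P).trace = (K ^ 2 * P).trace := by
      rw [trace_mul_comm, ← mul_assoc, hPP, trace_mul_comm, sq]
    have h₃ : (P * K * (P * K)).trace = ((K * P) ^ 2).trace := by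
      rw [mul_assoc, trace_mul_comm, sq]
      simp only [mul_assoc]
    rw [hexp, trace_add, trace_sub, trace_sub, h₁, h₂, h₃, ← sq]
    ring
  have hA0 : A = 0 :=
    trace_conjTranspose_mul_self_eq_zero_iff.mp (by rw [hA, neg_mul, trace_neg, hAA, h]; ring)
  exact sub_eq_zero.mp hA0

open scoped MatrixOrder Matrix.Norms.L2Operator in
lemma IsHermitian.posSemidef_add_smul_one {A : Matrix n n ℝ} (hA : A.IsHermitian) {s : ℝ}
    (h : ∀ i, -s ≤ hA.eigenvalues i) : (A + s • 1).PosSemidef := by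
  have key : algebraMap ℝ (Matrix n n ℝ) (-s) ≤ A := by
    rw [algebraMap_le_iff_le_spectrum hA.isSelfAdjoint, hA.spectrum_real_eq_range_eigenvalues]
    rintro _ ⟨i, rfl⟩
    exact h i
  simpa [le_iff, Algebra.algebraMap_eq_smul_one, sub_eq_add_neg] using key

-- Split `w = P w + (w - P w)`: the cross terms vanish and `w ⬝ᵥ P *ᵥ w = ‖P w‖²`.
lemma IsSymm.posSemidef_add_smul_of_commute {K P : Matrix n n ℝ} (hK : K.IsSymm)
    (hP : P.IsSymm) (hPP : P * P = P) (hKP : Commute K P) {s : ℝ} (hs : (K + s • 1).PosSemidef)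
    (hker : ∀ v, P *ᵥ v = 0 → 0 ≤ v ⬝ᵥ K *ᵥ v) : (K + s • P).PosSemidef := by
  refine PosSemidef.of_dotProduct_mulVec_nonneg
    (isHermitian_iff_isSymm.mpr (hK.add (hP.smul s))) fun w => ?_
  set p := P *ᵥ w
  set v := w - p
  have hv : P *ᵥ v = 0 := by rw [mulVec_sub, mulVec_mulVec, hPP, sub_self]
  have hpv : p ⬝ᵥ K *ᵥ v = 0 := hP.mulVec_dotProduct_mulVec_eq_zero_of_commute hKP hv w
  have hvp : v ⬝ᵥ K *ᵥ p = 0 := by rw [← hK.mulVec_dotProduct, dotProduct_comm, hpv]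
  have hwPw : w ⬝ᵥ P *ᵥ w = p ⬝ᵥ p := by rw [← hPP, ← mulVec_mulVec, ← hP.mulVec_dotProduct]
  have hwKw : w ⬝ᵥ K *ᵥ w = p ⬝ᵥ K *ᵥ p + v ⬝ᵥ K *ᵥ v := by
    have hw : w = p + v := (add_sub_cancel p w).symm
    rw [hw, mulVec_add, dotProduct_add, add_dotProduct, add_dotProduct, hpv, hvp]
    ring
  have hp := hs.dotProduct_mulVec_nonneg p
  simp only [star_trivial, add_mulVec, smul_mulVec, one_mulVec, dotProduct_add,
    dotProduct_smul, smul_eq_mul] at hp ⊢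
  rw [hwKw, hwPw]
  linarith [hker v hv]

end Matrix

def PseudomonotoneOn (F : (n → ℝ) → n → ℝ) (C : Set (n → ℝ)) : Prop :=
  ∀ x ∈ C, ∀ y ∈ C, 0 ≤ F x ⬝ᵥ (y - x) → 0 ≤ F y ⬝ᵥ (y - x)

lemma HasFDerivAt.hasDerivAt_dotProduct_comp_add_smul {G : (n → ℝ) → n → ℝ}
    {G' : (n → ℝ) →L[ℝ] n → ℝ} {y u : n → ℝ} {t : ℝ} (hG : HasFDerivAt G G' (y + t • u)) :
    HasDerivAt (fun r : ℝ => G (y + r • u) ⬝ᵥ u) (G' u ⬝ᵥ u) t := by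
  have hline : HasDerivAt (fun r : ℝ => y + r • u) u t := by
    simpa using ((hasDerivAt_id t).smul_const u).const_add y
  have hcoord := hasDerivAt_pi.mp (hG.comp_hasDerivAt t hline)
  exact HasDerivAt.fun_sum fun i _ => (hcoord i).mul_const (u i)

-- `φ t = F (z + t • v) ⬝ᵥ v` vanishes at `0` and pseudomonotonicity gives `0 ≤ t * φ t`.
lemma PseudomonotoneOn.dotProduct_fderiv_self_nonneg {F : (n → ℝ) → n → ℝ} {C : Set (n → ℝ)}
    (hF : PseudomonotoneOn F C) {z : n → ℝ} (hz : C ∈ 𝓝 z) {F' : (n → ℝ) →L[ℝ] n → ℝ}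
    (hF' : HasFDerivAt F F' z) {v : n → ℝ} (hv : F z ⬝ᵥ v = 0) : 0 ≤ F' v ⬝ᵥ v := by
  set φ := fun r : ℝ => F (z + r • v) ⬝ᵥ v
  have hφ : HasDerivAt φ (F' v ⬝ᵥ v) 0 :=
    HasFDerivAt.hasDerivAt_dotProduct_comp_add_smul (by simpa using hF')
  have hline : ∀ᶠ t in 𝓝 (0 : ℝ), z + t • v ∈ C :=
    (continuous_const.add (continuous_id.smul continuous_const)).tendsto' 0 z (by simp) hz
  have hslope : ∀ᶠ t in 𝓝[≠] (0 : ℝ), 0 ≤ slope φ 0 t := by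
    filter_upwards [nhdsWithin_le_nhds hline, self_mem_nhdsWithin] with t ht ht0
    have hmul : 0 ≤ t * φ t := by
      simpa [φ, dotProduct_smul] using
        hF z (mem_of_mem_nhds hz) _ ht (by simp [dotProduct_smul, hv])
    have hslope_eq : slope φ 0 t = t * φ t / t ^ 2 := by
      rw [slope_def_field]
      field_simp
      simp [φ, hv]
    rw [hslope_eq]
    positivity
  exact ge_of_tendsto (hasDerivAt_iff_tendsto_slope.mp hφ) hslope

lemma dotProduct_sub_nonneg_of_hasFDerivAt {G : (n → ℝ) → n → ℝ}
    {G' : (n → ℝ) → (n → ℝ) →L[ℝ] n → ℝ} {C : Set (n → ℝ)} (hC : Convex ℝ C)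
    (hG : ∀ z ∈ C, HasFDerivAt G (G' z) z) (hG' : ∀ z ∈ C, ∀ w, 0 ≤ G' z w ⬝ᵥ w)
    {x y : n → ℝ} (hx : x ∈ C) (hy : y ∈ C) : 0 ≤ (G x - G y) ⬝ᵥ (x - y) := by
  set φ := fun t : ℝ => G (y + t • (x - y)) ⬝ᵥ (x - y)
  have hseg : ∀ t ∈ Icc (0 : ℝ) 1, y + t • (x - y) ∈ C := fun t ht => hC.add_smul_sub_mem hy hx ht
  have hφ : ∀ t ∈ Icc (0 : ℝ) 1, HasDerivAt φ (G' (y + t • (x - y)) (x - y) ⬝ᵥ (x - y)) t :=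
    fun t ht => (hG _ (hseg t ht)).hasDerivAt_dotProduct_comp_add_smul
  have hmono : MonotoneOn φ (Icc 0 1) :=
    monotoneOn_of_hasDerivWithinAt_nonneg (convex_Icc 0 1)
      (fun t ht => (hφ t ht).continuousAt.continuousWithinAt)
      (fun t ht => (hφ t (interior_subset ht)).hasDerivWithinAt)
      (fun t ht => hG' _ (hseg t (interior_subset ht)) _)
  have h01 := hmono (left_mem_Icc.2 zero_le_one) (right_mem_Icc.2 zero_le_one) zero_le_one
  simp only [φ, zero_smul, add_zero, one_smul, add_sub_cancel] at h01
  rw [sub_dotProduct]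
  linarith

theorem stmt_14_general {m : ℕ} (C₀ : Set (Fin m → ℝ)) (hopen : IsOpen C₀) (hconv : Convex ℝ C₀)
    (F : (Fin m → ℝ) → (Fin m → ℝ)) (hF : ContDiff ℝ 1 F)
    (hpseudo : ∀ x ∈ C₀, ∀ y ∈ C₀,
      0 ≤ ∑ i, F x i * (y i - x i) → 0 ≤ ∑ i, F y i * (y i - x i))
    (J : (Fin m → ℝ) → Matrix (Fin m) (Fin m) ℝ)
    (hJ : ∀ x ∈ C₀, ∀ u : Fin m → ℝ, (J x).mulVec u = fderiv ℝ F x u)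
    (hsym : ∀ x ∈ C₀, (J x).IsHermitian)
    (P : Matrix (Fin m) (Fin m) ℝ) (hP1 : Pᵀ = P) (hP2 : P * P = P)
    (htr : ∀ x ∈ C₀, ((J x * P) ^ 2).trace = ((J x) ^ 2 * P).trace)
    (hnpsd : ∀ x ∈ C₀, ¬ (J x * P).PosSemidef)
    (s : ℝ)
    (hs : ∀ (x : Fin m → ℝ) (hx : x ∈ C₀), ∀ i : Fin m,
      |(hsym x hx).eigenvalues i| ≤ s) :
    ∀ x ∈ C₀, ∀ y ∈ C₀,
      0 ≤ ∑ i, ((F x i + s * P.mulVec x i) - (F y i + s * P.mulVec y i)) * (x i - y i) := by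
  have hJsymm z (hz : z ∈ C₀) : (J z).IsSymm := isHermitian_iff_isSymm.mp (hsym z hz)
  have hFz z : HasFDerivAt F (fderiv ℝ F z) z := (hF.differentiable one_ne_zero z).hasFDerivAt
  have hJP z (hz : z ∈ C₀) : Commute (J z) P :=
    commute_of_trace_mul_sq_eq (hJsymm z hz) hP1 hP2 (htr z hz)
  have hsecond z (hz : z ∈ C₀) v (hv : F z ⬝ᵥ v = 0) : 0 ≤ v ⬝ᵥ J z *ᵥ v := by
    rw [dotProduct_comm, hJ z hz]
    exact PseudomonotoneOn.dotProduct_fderiv_self_nonneg hpseudo (hopen.mem_nhds hz) (hFz z) hv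
  have hpsd z (hz : z ∈ C₀) : (J z + s • P).PosSemidef :=
    (hJsymm z hz).posSemidef_add_smul_of_commute hP1 hP2 (hJP z hz)
      ((hsym z hz).posSemidef_add_smul_one fun i => (abs_le.mp (hs z hz i)).1)
      fun _ hv => (hJsymm z hz).dotProduct_mulVec_self_nonneg_of_mulVec_eq_zero hP1 hP2
        (hJP z hz) (hnpsd z hz) (hsecond z hz) hv
  set L := LinearMap.toContinuousLinearMap (mulVecLin P)
  intro x hx y hy
  refine dotProduct_sub_nonneg_of_hasFDerivAt (G := fun x => F x + s • P *ᵥ x)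
    (G' := fun z => fderiv ℝ F z + s • L) hconv
    (fun z _ => (hFz z).add (L.hasFDerivAt.const_smul s)) (fun z hz w => ?_) hx hy
  simpa [L, ← hJ z hz, add_mulVec, smul_mulVec, dotProduct_comm w] using
    (hpsd z hz).dotProduct_mulVec_nonneg w

theorem stmt_14 {m : ℕ} (C₀ : Set (Fin m → ℝ)) (hopen : IsOpen C₀) (hconv : Convex ℝ C₀)
    (F : (Fin m → ℝ) → (Fin m → ℝ)) (hF : ContDiff ℝ 1 F)
    (hpseudo : ∀ x ∈ C₀, ∀ y ∈ C₀,
      0 ≤ ∑ i, F x i * (y i - x i) → 0 ≤ ∑ i, F y i * (y i - x i))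
    (J : (Fin m → ℝ) → Matrix (Fin m) (Fin m) ℝ)
    (hJ : ∀ x ∈ C₀, ∀ u : Fin m → ℝ, (J x).mulVec u = fderiv ℝ F x u)
    (hsym : ∀ x ∈ C₀, (J x).IsHermitian)
    (P : Matrix (Fin m) (Fin m) ℝ) (hP1 : Pᵀ = P) (hP2 : P * P = P)
    (htr : ∀ x ∈ C₀, ((J x * P) ^ 2).trace = ((J x) ^ 2 * P).trace)
    (hnpsd : ∀ x ∈ C₀, ¬ (J x * P).PosSemidef)
    (s : ℝ) (hs0 : 0 ≤ s)
    (hs : ∀ (x : Fin m → ℝ) (hx : x ∈ C₀), ∀ i : Fin m,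
      |(hsym x hx).eigenvalues i| ≤ s) :
    ∀ x ∈ C₀, ∀ y ∈ C₀,
      0 ≤ ∑ i, ((F x i + s * P.mulVec x i) - (F y i + s * P.mulVec y i)) * (x i - y i) :=
  stmt_14_general C₀ hopen hconv F hF hpseudo J hJ hsym P hP1 hP2 htr hnpsd s hs
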